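/- arXiv:1312.4131 — 4 statements merged into one kernel-verified Lean document; each statement's English description precedes it below -/
import Mathlib

section
/- Let f : (0,∞) → (0,∞) be an increasing bijection onto (0,∞) with inverse g, such that x ↦ f(x)/√x is decreasing and tends to 0 as x → ∞. Then ∫₁^∞ f(t)/t^{3/2} dt < ∞ if and only if ∫₁^∞ 1/√(g(s)) ds < ∞. -/
open MeasureTheory Set Filter
open scoped ENNReal

/-- `∫⁻ t in Ioi a, (t^(3/2))⁻¹ = 2/√a` for `a > 0`. -/
lemma lint_rpow_aux (a : ℝ) (ha : 0 < a) :
    ∫⁻ t in Ioi a, ENNReal.ofReal ((t ^ ((3:ℝ)/2))⁻¹)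
      = ENNReal.ofReal (2 * (Real.sqrt a)⁻¹) := by
  have hcg : ∀ᵐ t ∂(volume.restrict (Ioi a)),
      ENNReal.ofReal ((t ^ ((3:ℝ)/2))⁻¹) = ENNReal.ofReal (t ^ (-((3:ℝ)/2))) := by
    refine (ae_restrict_mem measurableSet_Ioi).mono fun t ht => ?_
    rw [Real.rpow_neg (le_of_lt (ha.trans ht))]
  rw [lintegral_congr_ae hcg]
  rw [← ofReal_integral_eq_lintegral_ofReal
      (integrableOn_Ioi_rpow_of_lt (by norm_num) ha)
      ((ae_restrict_mem measurableSet_Ioi).mono fun t ht =>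
        Real.rpow_nonneg (le_of_lt (ha.trans ht)) _)]
  rw [integral_Ioi_rpow_of_lt (by norm_num) ha]
  congr 1
  have h1 : (Real.sqrt a)⁻¹ = a ^ (-(1/2) : ℝ) := by
    rw [Real.rpow_neg ha.le, Real.sqrt_eq_rpow]
  rw [h1, show (-((3:ℝ)/2) + 1) = (-(1/2) : ℝ) by norm_num]
  ring

/-- For an increasing bijection `f` of `(0,∞)` onto itself with inverse `g`,
such that `f x / √x` is decreasing and tends to `0` at infinity,
`∫₁^∞ f t / t^{3/2} dt < ∞ ↔ ∫₁^∞ 1/√(g s) ds < ∞`. -/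
theorem stmt0 (f g : ℝ → ℝ)
    (hf_mono : StrictMonoOn f (Ioi 0))
    (hf_maps : MapsTo f (Ioi 0) (Ioi 0))
    (hf_surj : SurjOn f (Ioi 0) (Ioi 0))
    (hf_cont : ContinuousOn f (Ioi 0))
    (hf1 : f 1 = 1)
    (hg_left : ∀ x ∈ Ioi (0:ℝ), g (f x) = x)
    (hg_right : ∀ y ∈ Ioi (0:ℝ), f (g y) = y)
    (hratio_anti : AntitoneOn (fun x => f x / Real.sqrt x) (Ioi 0))
    (hratio_lim : Tendsto (fun x => f x / Real.sqrt x) atTop (nhds 0)) :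
    IntegrableOn (fun t => f t / t ^ ((3:ℝ)/2)) (Ioi 1) volume ↔
      IntegrableOn (fun s => (Real.sqrt (g s))⁻¹) (Ioi 1) volume := by
  -- basic facts
  have hmem : ∀ a : ℝ, max a 1 ∈ Ioi (0:ℝ) :=
    fun a => mem_Ioi.mpr (lt_of_lt_of_le one_pos (le_max_right a 1))
  have hg_mem : ∀ s ∈ Ioi (0:ℝ), g s ∈ Ioi (0:ℝ) := by
    intro s hs
    obtain ⟨x, hx, hfx⟩ := hf_surj hs
    rw [← hfx, hg_left x hx]; exact hx
  have hg_monoOn : MonotoneOn g (Ioi 0) := by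
    intro a ha b hb hab
    by_contra hcon
    push_neg at hcon
    have h2 := hf_mono (hg_mem b hb) (hg_mem a ha) hcon
    rw [hg_right a ha, hg_right b hb] at h2
    linarith
  have key : ∀ t ∈ Ioi (0:ℝ), ∀ s ∈ Ioi (0:ℝ), (s < f t ↔ g s < t) := by
    intro t ht s hs
    constructor
    · intro h
      by_contra hcon
      push_neg at hcon
      have h2 := hf_mono.monotoneOn ht (hg_mem s hs) hcon
      rw [hg_right s hs] at h2
      linarith
    · intro h
      have h2 := hf_mono (hg_mem s hs) ht h
      rwa [hg_right s hs] at h2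
  have hg1 : ∀ s ∈ Ioi (1:ℝ), 1 < g s := by
    intro s hs
    have hs0 : s ∈ Ioi (0:ℝ) := mem_Ioi.mpr (lt_trans one_pos (mem_Ioi.mp hs))
    by_contra hcon
    push_neg at hcon
    have h2 := hf_mono.monotoneOn (hg_mem s hs0) (mem_Ioi.mpr one_pos) hcon
    rw [hg_right s hs0, hf1] at h2
    linarith [mem_Ioi.mp hs]
  have hf_gt1 : ∀ t ∈ Ioi (1:ℝ), 1 < f t := by
    intro t ht
    have h2 := hf_mono (mem_Ioi.mpr one_pos)
      (mem_Ioi.mpr (lt_trans one_pos (mem_Ioi.mp ht))) (mem_Ioi.mp ht)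
    rwa [hf1] at h2
  -- measurable monotone extensions
  set f' : ℝ → ℝ := fun t => f (max t 1) with hf'def
  have hf'_mono : Monotone f' :=
    fun a b hab => hf_mono.monotoneOn (hmem a) (hmem b) (max_le_max hab le_rfl)
  have hf'_meas : Measurable f' := hf'_mono.measurable
  have hf'_eq : ∀ t ∈ Ioi (1:ℝ), f' t = f t := by
    intro t ht
    simp only [hf'def]
    rw [max_eq_left (le_of_lt (mem_Ioi.mp ht))]
  set g' : ℝ → ℝ := fun s => g (max s 1) with hg'def
  have hg'_mono : Monotone g' :=
    fun a b hab => hg_monoOn (hmem a) (hmem b) (max_le_max hab le_rfl)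
  have hg'_meas : Measurable g' := hg'_mono.measurable
  have hg'_eq : ∀ s ∈ Ioi (1:ℝ), g' s = g s := by
    intro s hs
    simp only [hg'def]
    rw [max_eq_left (le_of_lt (mem_Ioi.mp hs))]
  -- the weight
  set c : ℝ → ℝ≥0∞ := fun t => ENNReal.ofReal ((t ^ ((3:ℝ)/2))⁻¹) with hcdef
  have h32cont : Continuous (fun t : ℝ => t ^ ((3:ℝ)/2)) :=
    Real.continuous_rpow_const (by norm_num)
  have hc_meas : Measurable c :=
    ENNReal.measurable_ofReal.comp h32cont.measurable.inv
  -- the Fubini region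
  set A : Set (ℝ × ℝ) := {p : ℝ × ℝ | p.2 < f' p.1} ∩ (Ioi 1 ×ˢ Ioi 1) with hAdef
  have hA : MeasurableSet A :=
    (measurableSet_lt measurable_snd (hf'_meas.comp measurable_fst)).inter
      (measurableSet_Ioi.prod measurableSet_Ioi)
  set F : ℝ × ℝ → ℝ≥0∞ := A.indicator (fun p => c p.1) with hFdef
  have hF_meas : Measurable F := (hc_meas.comp measurable_fst).indicator hA
  have hswap := lintegral_lintegral_swap (μ := (volume : Measure ℝ))
      (ν := (volume : Measure ℝ)) (f := fun t s => F (t, s)) hF_meas.aemeasurable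
  -- slices in the t-direction
  have hL : ∀ t : ℝ, (∫⁻ s, F (t, s)) =
      (Ioi 1).indicator (fun t => c t * ENNReal.ofReal (f t - 1)) t := by
    intro t
    by_cases ht : t ∈ Ioi (1:ℝ)
    · rw [indicator_of_mem ht]
      have hiff : ∀ s : ℝ, (t, s) ∈ A ↔ s ∈ Ioo 1 (f t) := by
        intro s
        simp only [hAdef, mem_inter_iff, mem_setOf_eq, mem_prod, mem_Ioi, mem_Ioo]
        rw [hf'_eq t ht]
        constructor
        · rintro ⟨h1, _, h3⟩; exact ⟨h3, h1⟩
        · rintro ⟨h1, h2⟩; exact ⟨h2, mem_Ioi.mp ht, h1⟩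
      have hpt : ∀ s, F (t, s) = (Ioo 1 (f t)).indicator (fun _ => c t) s := by
        intro s
        rw [hFdef, indicator_apply, indicator_apply]
        by_cases h : (t, s) ∈ A
        · rw [if_pos h, if_pos ((hiff s).mp h)]
        · rw [if_neg h, if_neg (fun hc2 => h ((hiff s).mpr hc2))]
      rw [lintegral_congr hpt, lintegral_indicator_const measurableSet_Ioo,
        Real.volume_Ioo]
    · rw [indicator_of_notMem ht]
      have hpt : ∀ s, F (t, s) = 0 := by
        intro s
        refine indicator_of_notMem (fun hmemA => ht ?_) _
        exact hmemA.2.1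
      rw [lintegral_congr hpt, lintegral_zero]
  -- slices in the s-direction
  have hR : ∀ s : ℝ, (∫⁻ t, F (t, s)) =
      (Ioi 1).indicator (fun s => ENNReal.ofReal (2 * (Real.sqrt (g s))⁻¹)) s := by
    intro s
    by_cases hs : s ∈ Ioi (1:ℝ)
    · rw [indicator_of_mem hs]
      have hs0 : s ∈ Ioi (0:ℝ) := mem_Ioi.mpr (lt_trans one_pos (mem_Ioi.mp hs))
      have hgs1 : 1 < g s := hg1 s hs
      have hiff : ∀ t : ℝ, (t, s) ∈ A ↔ t ∈ Ioi (g s) := by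
        intro t
        simp only [hAdef, mem_inter_iff, mem_setOf_eq, mem_prod, mem_Ioi]
        constructor
        · rintro ⟨h1, h2, _⟩
          rw [hf'_eq t (mem_Ioi.mpr h2)] at h1
          exact (key t (mem_Ioi.mpr (lt_trans one_pos h2)) s hs0).mp h1
        · intro h
          have ht1 : 1 < t := lt_trans hgs1 h
          refine ⟨?_, ht1, mem_Ioi.mp hs⟩
          rw [hf'_eq t (mem_Ioi.mpr ht1)]
          exact (key t (mem_Ioi.mpr (lt_trans one_pos ht1)) s hs0).mpr h
      have hpt : ∀ t, F (t, s) = (Ioi (g s)).indicator c t := by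
        intro t
        rw [hFdef, indicator_apply, indicator_apply]
        by_cases h : (t, s) ∈ A
        · rw [if_pos h, if_pos ((hiff t).mp h)]
        · rw [if_neg h, if_neg (fun hc2 => h ((hiff t).mpr hc2))]
      rw [lintegral_congr hpt, lintegral_indicator measurableSet_Ioi]
      exact lint_rpow_aux (g s) (lt_trans one_pos hgs1)
    · rw [indicator_of_notMem hs]
      have hpt : ∀ t, F (t, s) = 0 := by
        intro t
        refine indicator_of_notMem (fun hmemA => hs ?_) _
        exact hmemA.2.2
      rw [lintegral_congr hpt, lintegral_zero]
  -- the key identity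
  have hE : (∫⁻ t in Ioi 1, c t * ENNReal.ofReal (f t - 1)) =
      ∫⁻ s in Ioi 1, ENNReal.ofReal (2 * (Real.sqrt (g s))⁻¹) := by
    calc (∫⁻ t in Ioi 1, c t * ENNReal.ofReal (f t - 1))
        = ∫⁻ t, (Ioi 1).indicator (fun t => c t * ENNReal.ofReal (f t - 1)) t :=
          (lintegral_indicator measurableSet_Ioi _).symm
      _ = ∫⁻ t, ∫⁻ s, F (t, s) := (lintegral_congr hL).symm
      _ = ∫⁻ s, ∫⁻ t, F (t, s) := hswap
      _ = ∫⁻ s, (Ioi 1).indicator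
            (fun s => ENNReal.ofReal (2 * (Real.sqrt (g s))⁻¹)) s := lintegral_congr hR
      _ = ∫⁻ s in Ioi 1, ENNReal.ofReal (2 * (Real.sqrt (g s))⁻¹) :=
          lintegral_indicator measurableSet_Ioi _
  have h2E : (∫⁻ s in Ioi 1, ENNReal.ofReal (2 * (Real.sqrt (g s))⁻¹)) =
      2 * ∫⁻ s in Ioi 1, ENNReal.ofReal ((Real.sqrt (g s))⁻¹) := by
    simp_rw [ENNReal.ofReal_mul (by norm_num : (0:ℝ) ≤ 2)]
    rw [lintegral_const_mul' _ _ (by simp)]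
    norm_num
  -- integrable helper functions
  set χ : ℝ → ℝ := fun t => (t ^ ((3:ℝ)/2))⁻¹ with hχdef
  have hχ : IntegrableOn χ (Ioi 1) volume := by
    refine (integrableOn_Ioi_rpow_of_lt (by norm_num : (-((3:ℝ)/2)) < -1)
      one_pos).congr_fun (fun t ht => ?_) measurableSet_Ioi
    show t ^ (-((3:ℝ)/2)) = (t ^ ((3:ℝ)/2))⁻¹
    rw [Real.rpow_neg (le_of_lt (lt_trans one_pos (mem_Ioi.mp ht)))]
  set ψ : ℝ → ℝ := fun t => (f t - 1) * χ t with hψdef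
  have hψ_aesm : AEStronglyMeasurable ψ (volume.restrict (Ioi 1)) := by
    refine ((((hf'_meas.sub (measurable_const : Measurable fun _ : ℝ => (1:ℝ)))).mul
      h32cont.measurable.inv).aestronglyMeasurable).congr ?_
    refine (ae_restrict_mem measurableSet_Ioi).mono fun t ht => ?_
    simp only [hψdef, hχdef, Pi.mul_apply, Pi.sub_apply, Pi.inv_apply, hf'_eq t ht]
  have hψnn : 0 ≤ᵐ[volume.restrict (Ioi 1)] ψ := by
    refine (ae_restrict_mem measurableSet_Ioi).mono fun t ht => ?_
    have h1 := hf_gt1 t ht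
    have h2 : (0:ℝ) ≤ (t ^ ((3:ℝ)/2))⁻¹ :=
      inv_nonneg.mpr (Real.rpow_nonneg (le_of_lt (lt_trans one_pos (mem_Ioi.mp ht))) _)
    exact mul_nonneg (by linarith) h2
  have hE1eq : (∫⁻ t in Ioi 1, c t * ENNReal.ofReal (f t - 1)) =
      ∫⁻ t in Ioi 1, ENNReal.ofReal (ψ t) := by
    refine setLIntegral_congr_fun measurableSet_Ioi (fun t ht => ?_)
    have h2 : (0:ℝ) ≤ f t - 1 := by linarith [hf_gt1 t ht]
    rw [hψdef]
    simp only []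
    rw [ENNReal.ofReal_mul h2, mul_comm]
  have hψ_int_iff : IntegrableOn ψ (Ioi 1) volume ↔
      (∫⁻ t in Ioi 1, c t * ENNReal.ofReal (f t - 1)) < ⊤ := by
    rw [hE1eq, IntegrableOn]
    constructor
    · intro h
      exact (hasFiniteIntegral_iff_ofReal hψnn).mp h.hasFiniteIntegral
    · intro h
      exact ⟨hψ_aesm, (hasFiniteIntegral_iff_ofReal hψnn).mpr h⟩
  -- left-hand side reduction
  have hφψ : IntegrableOn (fun t => f t / t ^ ((3:ℝ)/2)) (Ioi 1) volume ↔
      IntegrableOn ψ (Ioi 1) volume := by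
    constructor
    · intro h
      refine (h.sub hχ).congr ?_
      refine (ae_restrict_mem measurableSet_Ioi).mono fun t ht => ?_
      simp only [hψdef, hχdef, Pi.sub_apply, div_eq_mul_inv]
      ring
    · intro h
      refine (h.add hχ).congr ?_
      refine (ae_restrict_mem measurableSet_Ioi).mono fun t ht => ?_
      simp only [hψdef, hχdef, Pi.add_apply, div_eq_mul_inv]
      ring
  -- right-hand side reduction
  set ρ : ℝ → ℝ := fun s => (Real.sqrt (g s))⁻¹ with hρdef
  have hρ_aesm : AEStronglyMeasurable ρ (volume.restrict (Ioi 1)) := by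
    refine ((Real.continuous_sqrt.measurable.comp hg'_meas).inv.aestronglyMeasurable).congr ?_
    refine (ae_restrict_mem measurableSet_Ioi).mono fun s hs => ?_
    simp only [hρdef, Pi.inv_apply, Function.comp_apply, hg'_eq s hs]
  have hρnn : 0 ≤ᵐ[volume.restrict (Ioi 1)] ρ :=
    ae_of_all _ fun s => inv_nonneg.mpr (Real.sqrt_nonneg _)
  have hρ_int_iff : IntegrableOn ρ (Ioi 1) volume ↔
      (∫⁻ s in Ioi 1, ENNReal.ofReal ((Real.sqrt (g s))⁻¹)) < ⊤ := by
    rw [IntegrableOn]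
    constructor
    · intro h
      exact (hasFiniteIntegral_iff_ofReal hρnn).mp h.hasFiniteIntegral
    · intro h
      exact ⟨hρ_aesm, (hasFiniteIntegral_iff_ofReal hρnn).mpr h⟩
  -- assemble
  rw [hφψ, hψ_int_iff, hρ_int_iff, hE, h2E]
  constructor
  · intro h
    calc (∫⁻ s in Ioi 1, ENNReal.ofReal ((Real.sqrt (g s))⁻¹))
        = 1 * ∫⁻ s in Ioi 1, ENNReal.ofReal ((Real.sqrt (g s))⁻¹) := (one_mul _).symm
      _ ≤ 2 * ∫⁻ s in Ioi 1, ENNReal.ofReal ((Real.sqrt (g s))⁻¹) :=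
          mul_le_mul_left one_le_two _
      _ < ⊤ := h
  · intro h
    exact ENNReal.mul_lt_top (by norm_num) h
end

section
/- Let f be increasing with f(s)/√s decreasing to 0, g = f⁻¹, and suppose ∫₁^∞ f(s)/s^{3/2} ds = ∞. Then ∫₁^{f(y)} 1/√(g(s)) ds is asymptotically equivalent to (1/2)∫₁^y f(s)/s^{3/2} ds as y → ∞. -/
open MeasureTheory Set Filter

/-- With `f` a C¹ increasing bijection of `[1,∞)` onto itself, `f s / √s`
decreasing to `0`, `g = f⁻¹`, and `∫₁^∞ f s / s^{3/2} ds = ∞`, we have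
`∫₁^{f(y)} 1/√(g s) ds ∼ (1/2)∫₁^y f s / s^{3/2} ds` as `y → ∞`. -/
theorem stmt2 (f g : ℝ → ℝ)
    (hf_diff : ∀ x ∈ Ici (1:ℝ), HasDerivAt f (deriv f x) x)
    (hf_deriv_cont : ContinuousOn (deriv f) (Ici 1))
    (hf_mono : StrictMonoOn f (Ici 1))
    (hf_maps : MapsTo f (Ici 1) (Ici 1))
    (hf_surj : SurjOn f (Ici 1) (Ici 1))
    (hf1 : f 1 = 1)
    (hg_left : ∀ x ∈ Ici (1:ℝ), g (f x) = x)
    (hg_right : ∀ y ∈ Ici (1:ℝ), f (g y) = y)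
    (hratio_anti : AntitoneOn (fun x => f x / Real.sqrt x) (Ici 1))
    (hratio_lim : Tendsto (fun x => f x / Real.sqrt x) atTop (nhds 0))
    (hdiv : Tendsto (fun y => ∫ s in (1:ℝ)..y, f s / s ^ ((3:ℝ)/2)) atTop atTop) :
    Tendsto (fun y => (∫ s in (1:ℝ)..(f y), (Real.sqrt (g s))⁻¹) /
        ((1/2) * ∫ s in (1:ℝ)..y, f s / s ^ ((3:ℝ)/2))) atTop (nhds 1) := by
  -- g maps [1,∞) into itself
  have hg_maps : MapsTo g (Ici 1) (Ici 1) := by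
    intro y hy
    obtain ⟨x, hx, hfx⟩ := hf_surj hy
    rw [← hfx, hg_left x hx]; exact hx
  -- g is strictly monotone on [1,∞)
  have hg_mono : StrictMonoOn g (Ici 1) := by
    intro y₁ hy₁ y₂ hy₂ h
    obtain ⟨x₁, hx₁, hfx₁⟩ := hf_surj hy₁
    obtain ⟨x₂, hx₂, hfx₂⟩ := hf_surj hy₂
    rw [← hfx₁, ← hfx₂, hg_left x₁ hx₁, hg_left x₂ hx₂]
    by_contra hc
    push_neg at hc
    have := hf_mono.monotoneOn hx₂ hx₁ hc
    rw [hfx₁, hfx₂] at this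
    exact absurd h (not_lt.mpr this)
  have hg1 : g 1 = 1 := by
    have := hg_left 1 (by norm_num)
    rwa [hf1] at this
  -- g is surjective from [1,∞) onto [1,∞)
  have hg_surj : SurjOn g (Ici 1) (Ici 1) := by
    intro x hx
    exact ⟨f x, hf_maps hx, hg_left x hx⟩
  -- g is continuous on [1,∞)
  have hg_cont : ContinuousOn g (Ici 1) := by
    intro a ha
    rcases eq_or_lt_of_le (mem_Ici.mp ha) with h1 | h1
    · subst h1
      refine hg_mono.continuousWithinAt_right_of_surjOn self_mem_nhdsWithin ?_
      rw [hg1]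
      exact hg_surj.mono Subset.rfl Ioi_subset_Ici_self
    · refine (hg_mono.continuousAt_of_image_mem_nhds (Ici_mem_nhds h1) ?_).continuousWithinAt
      have himg : g '' Ici 1 = Ici 1 :=
        Subset.antisymm (image_subset_iff.mpr hg_maps) hg_surj
      rw [himg]
      have : (1:ℝ) < g a := by
        have := hg_mono (by norm_num : (1:ℝ) ∈ Ici 1) (le_of_lt h1) h1
        rwa [hg1] at this
      exact Ici_mem_nhds this
  -- integrand continuity
  have hint_cont : ContinuousOn (fun s => (Real.sqrt (g s))⁻¹) (Ici 1) := by
    refine ContinuousOn.inv₀ ((Real.continuous_sqrt.comp_continuousOn hg_cont)) ?_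
    intro s hs
    have : (1:ℝ) ≤ g s := hg_maps hs
    positivity
  -- key identity
  have key : ∀ y : ℝ, 1 ≤ y →
      (∫ s in (1:ℝ)..(f y), (Real.sqrt (g s))⁻¹)
        = f y / Real.sqrt y - 1 + (1/2) * ∫ s in (1:ℝ)..y, f s / s ^ ((3:ℝ)/2) := by
    intro y hy
    have huIcc : uIcc (1:ℝ) y = Icc 1 y := uIcc_of_le hy
    have hsub : uIcc (1:ℝ) y ⊆ Ici 1 := by rw [huIcc]; exact Icc_subset_Ici_self
    -- substitution s = f t
    have hsubst : (∫ s in (1:ℝ)..(f y), (Real.sqrt (g s))⁻¹)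
        = ∫ t in (1:ℝ)..y, deriv f t * (Real.sqrt (g (f t)))⁻¹ := by
      have := intervalIntegral.integral_comp_smul_deriv'
        (f := f) (f' := deriv f) (g := fun s => (Real.sqrt (g s))⁻¹) (a := 1) (b := y)
        (fun x hx => hf_diff x (hsub hx)) (hf_deriv_cont.mono hsub)
        (hint_cont.mono ?_)
      · rw [hf1] at this
        rw [← this]
        simp [smul_eq_mul, Function.comp]
      · rintro s ⟨x, hx, rfl⟩
        exact hf_maps (hsub hx)
    have hcongr : (∫ t in (1:ℝ)..y, deriv f t * (Real.sqrt (g (f t)))⁻¹)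
        = ∫ t in (1:ℝ)..y, (Real.sqrt t)⁻¹ * deriv f t := by
      refine intervalIntegral.integral_congr fun t ht => ?_
      rw [hg_left t (hsub ht), mul_comm]
    -- integration by parts with u = t^(-1/2), v = f
    have hparts : (∫ t in (1:ℝ)..y, (Real.sqrt t)⁻¹ * deriv f t)
        = f y / Real.sqrt y - 1 + (1/2) * ∫ s in (1:ℝ)..y, f s / s ^ ((3:ℝ)/2) := by
      have hu : ∀ t ∈ uIcc (1:ℝ) y,
          HasDerivAt (fun t : ℝ => t ^ (-(1/2) : ℝ))
            (-(1/2) * t ^ ((-(1/2) : ℝ) - 1)) t := by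
        intro t ht
        have ht1 : (1:ℝ) ≤ t := hsub ht
        exact Real.hasDerivAt_rpow_const (Or.inl (by linarith))
      have hu'cont : ContinuousOn (fun t : ℝ => -(1/2) * t ^ ((-(1/2) : ℝ) - 1)) (uIcc 1 y) := by
        refine ContinuousOn.mul continuousOn_const ?_
        refine ContinuousOn.rpow_const continuousOn_id fun t ht => Or.inl ?_
        have : (1:ℝ) ≤ t := hsub ht
        simp; linarith
      have hIBP := intervalIntegral.integral_mul_deriv_eq_deriv_mul
        (u := fun t : ℝ => t ^ (-(1/2) : ℝ)) (u' := fun t => -(1/2) * t ^ ((-(1/2) : ℝ) - 1))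
        (v := f) (v' := deriv f) (a := 1) (b := y)
        hu (fun x hx => hf_diff x (hsub hx))
        (hu'cont.intervalIntegrable) ((hf_deriv_cont.mono hsub).intervalIntegrable)
      have e1 : ∀ t : ℝ, 1 ≤ t → t ^ (-(1/2) : ℝ) = (Real.sqrt t)⁻¹ := by
        intro t ht
        rw [Real.sqrt_eq_rpow, ← Real.rpow_neg (by linarith)]
      have e2 : (∫ t in (1:ℝ)..y, t ^ (-(1/2) : ℝ) * deriv f t)
          = ∫ t in (1:ℝ)..y, (Real.sqrt t)⁻¹ * deriv f t := by
        refine intervalIntegral.integral_congr fun t ht => ?_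
        rw [e1 t (hsub ht)]
      have e3 : (∫ t in (1:ℝ)..y, (-(1/2) * t ^ ((-(1/2) : ℝ) - 1)) * f t)
          = ∫ t in (1:ℝ)..y, -(1/2) * (f t / t ^ ((3:ℝ)/2)) := by
        refine intervalIntegral.integral_congr fun t ht => ?_
        have ht1 : (1:ℝ) ≤ t := hsub ht
        have ht0 : (0:ℝ) ≤ t := by linarith
        have : ((-(1/2) : ℝ) - 1) = -((3:ℝ)/2) := by norm_num
        rw [this, Real.rpow_neg ht0]
        field_simp
      rw [e2] at hIBP
      rw [hIBP, e3, intervalIntegral.integral_const_mul]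
      simp only [e1 y hy, Real.one_rpow, hf1]
      rw [div_eq_mul_inv (f y)]
      ring
    rw [hsubst, hcongr, hparts]
  -- final limit computation
  set I : ℝ → ℝ := fun y => ∫ s in (1:ℝ)..y, f s / s ^ ((3:ℝ)/2) with hI
  have hden : Tendsto (fun y => (1/2 : ℝ) * I y) atTop atTop := by
    exact (tendsto_const_mul_atTop_of_pos (by norm_num : (0:ℝ) < 1/2)).mpr hdiv
  have hnum : Tendsto (fun y => f y / Real.sqrt y - 1) atTop (nhds (-1)) := by
    have := hratio_lim.sub (tendsto_const_nhds (x := (1:ℝ)))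
    simpa using this
  have hfrac : Tendsto (fun y => (f y / Real.sqrt y - 1) / ((1/2 : ℝ) * I y)) atTop (nhds 0) :=
    Tendsto.div_atTop hnum hden
  have hfinal : Tendsto (fun y => (f y / Real.sqrt y - 1) / ((1/2 : ℝ) * I y) + 1)
      atTop (nhds 1) := by
    have := hfrac.add (tendsto_const_nhds (x := (1:ℝ)))
    simpa using this
  refine hfinal.congr' ?_
  filter_upwards [eventually_ge_atTop (1:ℝ), hdiv.eventually_ge_atTop 1] with y hy hIy
  have hden_ne : (1/2 : ℝ) * I y ≠ 0 := by
    have : (1/2 : ℝ) * I y ≥ 1/2 := by nlinarith [hIy]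
    linarith
  rw [key y hy]
  simp only [hI]
  field_simp
  rw [add_div, mul_div_cancel_right₀ _ (fun h => hden_ne (by rw [show I y = 0 from h]; ring))]
end

section
/- Let f : [1,∞) → [1,∞) be a C¹ increasing bijection with f(1) = 1 such that x ↦ f(x)/√x is decreasing, and let g = f⁻¹. Then for every A > 3, h > 0, and y > max(g(h), 1), one has ∫_{max(f(Ay), t(A))}^∞ (1/√(g(s) − y) − 1/√(g(s))) ds ≤ (3/2) · f(y) / √(y(1 − 1/A)) − f(y)/√(y(1−1/A)), in particular this integral is at most f(y)/(2√(y(1 − 1/A))) and is finite. -/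
open MeasureTheory Set Filter

set_option maxHeartbeats 2000000

/-- For a C¹ increasing bijection `f` of `[1,∞)` onto itself with `f 1 = 1`,
`f x / √x` decreasing, inverse `g`, and `t(A)` defined by `g (t A) = 1 + 2/A`:
for `A > 3`, `h > 0`, `y > max (g h) 1`, the integral
`∫_{max (f (A y)) (t A)}^∞ (1/√(g s − y) − 1/√(g s)) ds` is finite and at most
`(3/2)·f y/√(y(1−1/A)) − f y/√(y(1−1/A)) = f y/(2√(y(1−1/A)))`. -/
theorem stmt3 (f g : ℝ → ℝ) (A h y tA : ℝ)
    (hf_diff : ∀ x ∈ Ici (1:ℝ), HasDerivAt f (deriv f x) x)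
    (hf_deriv_cont : ContinuousOn (deriv f) (Ici 1))
    (hf_mono : StrictMonoOn f (Ici 1))
    (hf_maps : MapsTo f (Ici 1) (Ici 1))
    (hf_surj : SurjOn f (Ici 1) (Ici 1))
    (hf1 : f 1 = 1)
    (hg_left : ∀ x ∈ Ici (1:ℝ), g (f x) = x)
    (hg_right : ∀ z ∈ Ici (1:ℝ), f (g z) = z)
    (hratio_anti : AntitoneOn (fun x => f x / Real.sqrt x) (Ici 1))
    (hA : 3 < A) (hh : 0 < h) (hy : max (g h) 1 < y)
    (htA : g tA = 1 + 2 / A) :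
    IntegrableOn (fun s => (Real.sqrt (g s - y))⁻¹ - (Real.sqrt (g s))⁻¹)
        (Ioi (max (f (A * y)) tA)) volume ∧
      (∫ s in Ioi (max (f (A * y)) tA),
          ((Real.sqrt (g s - y))⁻¹ - (Real.sqrt (g s))⁻¹)) ≤
        (3/2) * f y / Real.sqrt (y * (1 - 1/A)) - f y / Real.sqrt (y * (1 - 1/A)) ∧
      (∫ s in Ioi (max (f (A * y)) tA),
          ((Real.sqrt (g s - y))⁻¹ - (Real.sqrt (g s))⁻¹)) ≤
        f y / (2 * Real.sqrt (y * (1 - 1/A))) := by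
  have hy1 : (1:ℝ) < y := lt_of_le_of_lt (le_max_right _ _) hy
  have hy0 : (0:ℝ) < y := by linarith
  have hA1 : (1:ℝ) < A := by linarith
  have hA0 : (0:ℝ) < A := by linarith
  have hAinv : 1/A < 1 := by rw [div_lt_one hA0]; linarith
  have hdpos : (0:ℝ) < 1 - 1/A := by linarith
  have hyA : y < A * y := by nlinarith
  have hAy1 : A * y ∈ Ici (1:ℝ) := by
    simp only [mem_Ici]; nlinarith
  have hy_mem : y ∈ Ici (1:ℝ) := hy1.le
  have hfy1 : (1:ℝ) ≤ f y := hf_maps hy_mem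
  have hfyAy : f y ≤ f (A * y) := (hf_mono.le_iff_le hy_mem hAy1).2 hyA.le
  set L := max (f (A*y)) tA with hLdef
  have hL1 : (1:ℝ) ≤ L := le_trans (hf_maps hAy1) (le_max_left _ _)
  have hL0 : (0:ℝ) < L := lt_of_lt_of_le one_pos hL1
  have hfyL : f y ≤ L := le_trans hfyAy (le_max_left _ _)
  have hg_mem : ∀ s : ℝ, 1 ≤ s → g s ∈ Ici (1:ℝ) := by
    intro s hs
    obtain ⟨x, hx, hfx⟩ := hf_surj (show s ∈ Ici (1:ℝ) from hs)
    rw [← hfx, hg_left x hx]; exact hx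
  have key_u : ∀ s : ℝ, L < s → A * y < g s := by
    intro s hs
    have hs1 : (1:ℝ) ≤ s := le_trans hL1 hs.le
    have h1 : f (A*y) < f (g s) := by
      rw [hg_right s hs1]
      exact lt_of_le_of_lt (le_max_left _ _) hs
    exact (hf_mono.lt_iff_lt hAy1 (hg_mem s hs1)).1 h1
  have hg_mono : MonotoneOn g (Ioi L) := by
    intro s1 h1 s2 h2 h12
    have hs1 : (1:ℝ) ≤ s1 := le_trans hL1 (le_of_lt h1)
    have hs2 : (1:ℝ) ≤ s2 := le_trans hL1 (le_of_lt h2)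
    refine (hf_mono.le_iff_le (hg_mem s1 hs1) (hg_mem s2 hs2)).1 ?_
    rw [hg_right s1 hs1, hg_right s2 hs2]; exact h12
  have hc0 : 0 < Real.sqrt y := Real.sqrt_pos.2 hy0
  have hd0 : 0 < Real.sqrt (1 - 1/A) := Real.sqrt_pos.2 hdpos
  have hC0 : 0 < (f y)^3 / (Real.sqrt y * Real.sqrt (1 - 1/A)) := by positivity
  -- key pointwise estimate
  have key : ∀ s ∈ Ioi L, 0 ≤ (Real.sqrt (g s - y))⁻¹ - (Real.sqrt (g s))⁻¹ ∧
      (Real.sqrt (g s - y))⁻¹ - (Real.sqrt (g s))⁻¹ ≤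
        (f y)^3 / (Real.sqrt y * Real.sqrt (1 - 1/A)) / s^3 := by
    intro s hs
    rw [mem_Ioi] at hs
    have hs1 : (1:ℝ) ≤ s := le_trans hL1 hs.le
    have hs0 : (0:ℝ) < s := by linarith
    have hAyu : A * y < g s := key_u s hs
    have hu_mem : g s ∈ Ici (1:ℝ) := hg_mem s hs1
    set u := g s with hu
    have hyu : y < u := lt_trans hyA hAyu
    have hu0 : (0:ℝ) < u := lt_trans hy0 hyu
    set a := Real.sqrt u with ha
    set b := Real.sqrt (u - y) with hb
    set c := Real.sqrt y with hc
    set d := Real.sqrt (1 - 1/A) with hd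
    set F := f y with hF
    have hF0 : (0:ℝ) < F := by linarith
    have ha0 : 0 < a := Real.sqrt_pos.2 hu0
    have hb0 : 0 < b := Real.sqrt_pos.2 (by linarith)
    have ha2 : a^2 = u := Real.sq_sqrt hu0.le
    have hb2 : b^2 = u - y := Real.sq_sqrt (by linarith)
    have hc2 : c^2 = y := Real.sq_sqrt hy0.le
    have hba : b ≤ a := Real.sqrt_le_sqrt (by linarith)
    -- ratio inequality : s * c ≤ a * F
    have hratio : f u / a ≤ F / c := hratio_anti hy_mem hu_mem hyu.le
    have hfu : f u = s := hg_right s hs1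
    rw [hfu, div_le_div_iff₀ ha0 hc0] at hratio
    -- b ≥ a * d
    have hbad : a * d ≤ b := by
      have h2 : u * (1 - 1/A) ≤ u - y := by
        have hyuA : y ≤ u / A := by rw [le_div_iff₀ hA0]; nlinarith
        have : u * (1 - 1/A) = u - u/A := by field_simp
        linarith
      calc a * d = Real.sqrt (u * (1 - 1/A)) := (Real.sqrt_mul hu0.le _).symm
        _ ≤ b := Real.sqrt_le_sqrt h2
    have hinv : a⁻¹ ≤ b⁻¹ := by
      apply inv_anti₀ hb0 hba
    clear_value u a b c d F L
    clear hf_diff hf_deriv_cont hf_mono hf_maps hf_surj hg_left hg_right hratio_anti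
    clear hg_mono key_u hg_mem hy htA hC0 hfu hu ha hb hc hd hF hLdef hfyL hfyAy hy_mem hAy1
    refine ⟨by linarith, ?_⟩
    have hab' : (a - b) * a ≤ c^2 := by nlinarith [mul_le_mul_of_nonneg_right hba hb0.le]
    have h1 : s*c*d ≤ b*F := by
      linarith [mul_le_mul_of_nonneg_right hratio hd0.le,
        mul_le_mul_of_nonneg_right hbad hF0.le]
    have h2 : s^2*c^2 ≤ a^2*F^2 := by
      nlinarith [mul_pos hF0 ha0, mul_pos hs0 hc0, mul_le_mul hratio hratio (by positivity : (0:ℝ) ≤ s*c) (by positivity : (0:ℝ) ≤ F*a)]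
    have hh1 : (s^2*c^2) * (s*c*d) ≤ (a^2*F^2) * (b*F) :=
      mul_le_mul h2 h1 (by positivity) (by positivity)
    have main' : ((a - b) * (s^3*(c*d))) * a ≤ (F^3 * (a*b)) * a := by
      calc ((a-b)*(s^3*(c*d)))*a = ((a-b)*a)*(s^3*(c*d)) := by ring
        _ ≤ c^2 * (s^3*(c*d)) := mul_le_mul_of_nonneg_right hab' (by positivity)
        _ = (s^2*c^2)*(s*c*d) := by ring
        _ ≤ (a^2*F^2)*(b*F) := hh1
        _ = (F^3*(a*b))*a := by ring
    have main : (a - b) * (s^3*(c*d)) ≤ F^3 * (a*b) := le_of_mul_le_mul_right main' ha0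
    have hI : b⁻¹ - a⁻¹ = (a - b)/(a*b) := by
      rw [inv_sub_inv hb0.ne' ha0.ne', mul_comm b a]
    rw [hI]
    have hfin : (a-b)/(a*b) ≤ F^3/((c*d)*s^3) := by
      rw [div_le_div_iff₀ (by positivity) (by positivity)]
      calc (a-b)*((c*d)*s^3) = (a-b)*(s^3*(c*d)) := by ring
        _ ≤ F^3*(a*b) := main
    calc (a-b)/(a*b) ≤ F^3/((c*d)*s^3) := hfin
      _ = F^3/(c*d)/s^3 := by rw [div_div]
  -- measurability
  have hmeas : AEMeasurable g (volume.restrict (Ioi L)) :=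
    aemeasurable_restrict_of_monotoneOn measurableSet_Ioi hg_mono
  have hmeasI : AEStronglyMeasurable
      (fun s => (Real.sqrt (g s - y))⁻¹ - (Real.sqrt (g s))⁻¹) (volume.restrict (Ioi L)) := by
    apply AEMeasurable.aestronglyMeasurable
    have h1 : AEMeasurable (fun s => Real.sqrt (g s - y)) (volume.restrict (Ioi L)) :=
      Real.continuous_sqrt.measurable.comp_aemeasurable (hmeas.sub aemeasurable_const)
    have h2 : AEMeasurable (fun s => Real.sqrt (g s)) (volume.restrict (Ioi L)) :=
      Real.continuous_sqrt.measurable.comp_aemeasurable hmeas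
    exact h1.inv.sub h2.inv
  have hrpow_eq : ∀ s : ℝ, s ∈ Ioi L →
      (f y)^3 / (Real.sqrt y * Real.sqrt (1 - 1/A)) * s ^ (-3:ℝ)
        = (f y)^3 / (Real.sqrt y * Real.sqrt (1 - 1/A)) / s^3 := by
    intro s hs
    have hs0 : (0:ℝ) < s := lt_trans hL0 hs
    rw [Real.rpow_neg hs0.le, show ((3:ℝ)) = ((3:ℕ):ℝ) by norm_num, Real.rpow_natCast]
    ring
  have hb_int : IntegrableOn
      (fun s : ℝ => (f y)^3 / (Real.sqrt y * Real.sqrt (1 - 1/A)) * s ^ (-3:ℝ))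
      (Ioi L) volume :=
    (integrableOn_Ioi_rpow_of_lt (by norm_num) hL0).const_mul _
  have hInt : IntegrableOn (fun s => (Real.sqrt (g s - y))⁻¹ - (Real.sqrt (g s))⁻¹)
      (Ioi L) volume := by
    refine Integrable.mono hb_int hmeasI ?_
    filter_upwards [ae_restrict_mem measurableSet_Ioi] with s hs
    obtain ⟨h0, hle⟩ := key s hs
    have hs0 : (0:ℝ) < s := lt_trans hL0 hs
    rw [Real.norm_of_nonneg h0, Real.norm_of_nonneg (by positivity), hrpow_eq s hs]
    exact hle
  have hIntLe : (∫ s in Ioi L, ((Real.sqrt (g s - y))⁻¹ - (Real.sqrt (g s))⁻¹)) ≤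
      ∫ s in Ioi L, (f y)^3 / (Real.sqrt y * Real.sqrt (1 - 1/A)) * s ^ (-3:ℝ) := by
    refine setIntegral_mono_on hInt hb_int measurableSet_Ioi ?_
    intro s hs
    rw [hrpow_eq s hs]
    exact (key s hs).2
  have hIntEq : (∫ s in Ioi L, (f y)^3 / (Real.sqrt y * Real.sqrt (1 - 1/A)) * s ^ (-3:ℝ))
      = (f y)^3 / (Real.sqrt y * Real.sqrt (1 - 1/A)) * (L ^ (-2:ℝ) / 2) := by
    rw [integral_const_mul, integral_Ioi_rpow_of_lt (by norm_num) hL0]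
    norm_num
  have hLval : L ^ (-2:ℝ) = (L^2)⁻¹ := by
    rw [Real.rpow_neg hL0.le, show ((2:ℝ)) = ((2:ℕ):ℝ) by norm_num, Real.rpow_natCast]
  have hfy0 : (0:ℝ) < f y := by linarith
  have hrr : Real.sqrt (y * (1 - 1/A)) = Real.sqrt y * Real.sqrt (1 - 1/A) :=
    Real.sqrt_mul hy0.le _
  have hfinal : (∫ s in Ioi L, ((Real.sqrt (g s - y))⁻¹ - (Real.sqrt (g s))⁻¹)) ≤
      f y / (2 * Real.sqrt (y * (1 - 1/A))) := by
    have h1 : (f y)^3 / (Real.sqrt y * Real.sqrt (1 - 1/A)) * (L ^ (-2:ℝ) / 2)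
        ≤ f y / (2 * Real.sqrt (y * (1 - 1/A))) := by
      rw [hLval, hrr]
      have hL2 : (f y)^2 ≤ L^2 := by nlinarith
      have h2 : (L^2)⁻¹ ≤ ((f y)^2)⁻¹ :=
        inv_anti₀ (by positivity) hL2
      calc (f y)^3 / (Real.sqrt y * Real.sqrt (1 - 1/A)) * ((L^2)⁻¹ / 2)
          ≤ (f y)^3 / (Real.sqrt y * Real.sqrt (1 - 1/A)) * (((f y)^2)⁻¹ / 2) := by
            apply mul_le_mul_of_nonneg_left _ (by positivity)
            apply div_le_div_of_nonneg_right h2 (by norm_num)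
        _ = f y / (2 * (Real.sqrt y * Real.sqrt (1 - 1/A))) := by
            have habs : ∀ X : ℝ, 0 < X → (f y)^3 / X * (((f y)^2)⁻¹ / 2) = f y / (2 * X) := by
              intro X hX
              field_simp
            exact habs _ (by positivity)
    calc (∫ s in Ioi L, ((Real.sqrt (g s - y))⁻¹ - (Real.sqrt (g s))⁻¹))
        ≤ ∫ s in Ioi L, (f y)^3 / (Real.sqrt y * Real.sqrt (1 - 1/A)) * s ^ (-3:ℝ) := hIntLe
      _ = (f y)^3 / (Real.sqrt y * Real.sqrt (1 - 1/A)) * (L ^ (-2:ℝ) / 2) := hIntEq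
      _ ≤ f y / (2 * Real.sqrt (y * (1 - 1/A))) := h1
  have hr0 : 0 < Real.sqrt (y * (1 - 1/A)) := by rw [hrr]; positivity
  have heq2 : (3/2) * f y / Real.sqrt (y * (1 - 1/A)) - f y / Real.sqrt (y * (1 - 1/A))
      = f y / (2 * Real.sqrt (y * (1 - 1/A))) := by
    have habs : ∀ r : ℝ, 0 < r → (3/2) * f y / r - f y / r = f y / (2 * r) := by
      intro r hr
      field_simp
      ring
    exact habs _ hr0
  exact ⟨hInt, by rw [heq2]; exact hfinal, hfinal⟩
end

section
/- Let g(t) = t² ln²(t) for t ≥ e and let w : [e,∞) → [1,∞) be increasing. Then lim_{h→∞} ∫_h^{f(g(h)w(h))} g(s)^{−1/2} ds = 0 if and only if ln(w(h)) = o(ln(h)) as h → ∞, where f = g⁻¹. -/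
open Set Filter Asymptotics

/-- Let `g t = t² ln² t` (for `t ≥ e`), `f = g⁻¹`, and `w : [e,∞) → [1,∞)`
increasing.  Then `lim_{h→∞} ∫_h^{f(g(h)·w(h))} g(s)^{-1/2} ds = 0` iff
`ln (w h) = o(ln h)` as `h → ∞`. -/
theorem stmt18 (g f w : ℝ → ℝ)
    (hg : ∀ t ≥ Real.exp 1, g t = t ^ 2 * Real.log t ^ 2)
    (hf_mono : Monotone f)
    (hf_tend : Tendsto f atTop atTop)
    (hfg : ∀ᶠ u in atTop, g (f u) = u)
    (hgf : ∀ᶠ t in atTop, f (g t) = t)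
    (hw_mono : MonotoneOn w (Ici (Real.exp 1)))
    (hw_ge : ∀ h ∈ Ici (Real.exp 1), 1 ≤ w h) :
    Tendsto (fun h => ∫ s in h..(f (g h * w h)), (Real.sqrt (g s))⁻¹) atTop (nhds 0) ↔
      (fun h => Real.log (w h)) =o[atTop] fun h => Real.log h := by
  have hE : (2:ℝ) < Real.exp 1 := by have := Real.exp_one_gt_d9; linarith
  have hlog1 : ∀ h : ℝ, Real.exp 1 ≤ h → 1 ≤ Real.log h := by
    intro h hh
    rw [Real.le_log_iff_exp_le (by linarith)]
    exact hh
  have hglarge : ∀ᶠ h in atTop, Real.exp 1 ≤ h := eventually_ge_atTop _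
  set F : ℝ → ℝ := fun h => f (g h * w h) with hFdef
  set I : ℝ → ℝ := fun h => Real.log (Real.log (F h)) - Real.log (Real.log h) with hIdef
  -- g tends to atTop
  have hgform : ∀ᶠ h in atTop, g h = h ^ 2 * Real.log h ^ 2 := hglarge.mono hg
  have hexpl : Tendsto (fun h : ℝ => h ^ 2 * Real.log h ^ 2) atTop atTop :=
    (tendsto_pow_atTop two_ne_zero).atTop_mul_atTop₀
      ((tendsto_pow_atTop two_ne_zero).comp Real.tendsto_log_atTop)
  have hg_top : Tendsto g atTop atTop := Tendsto.congr' (hgform.mono fun _ h => h.symm) hexpl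
  have hg_le : ∀ᶠ h in atTop, g h ≤ g h * w h := by
    filter_upwards [hglarge] with h hh
    have h0 : (0:ℝ) ≤ g h := by
      rw [hg h hh]; positivity
    exact le_mul_of_one_le_right h0 (hw_ge h hh)
  have hu_top : Tendsto (fun h => g h * w h) atTop atTop :=
    tendsto_atTop_mono' atTop hg_le hg_top
  have hF_eq : ∀ᶠ h in atTop, g (F h) = g h * w h := hu_top.eventually hfg
  have hF_ge : ∀ᶠ h in atTop, h ≤ F h := by
    filter_upwards [hglarge, hgf, hg_le] with h hh hfgh hle
    calc h = f (g h) := hfgh.symm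
    _ ≤ F h := hf_mono hle
  -- the integral equals I h eventually
  have hInt : ∀ᶠ h in atTop,
      (∫ s in h..(F h), (Real.sqrt (g s))⁻¹) = I h := by
    filter_upwards [hglarge, hF_ge] with h hh hhF
    have huIcc : Set.uIcc h (F h) = Set.Icc h (F h) := Set.uIcc_of_le hhF
    have hmem : ∀ s ∈ Set.uIcc h (F h), Real.exp 1 ≤ s := by
      intro s hs
      rw [huIcc] at hs
      exact hh.trans hs.1
    have hcongr : Set.EqOn (fun s => (Real.sqrt (g s))⁻¹)
        (fun s => (s * Real.log s)⁻¹) (Set.uIcc h (F h)) := by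
      intro s hs
      have hse := hmem s hs
      have hs0 : (0:ℝ) < s := lt_of_lt_of_le (Real.exp_pos 1) hse
      have hls : 1 ≤ Real.log s := hlog1 s hse
      simp only
      rw [hg s hse]
      have : s ^ 2 * Real.log s ^ 2 = (s * Real.log s) ^ 2 := by ring
      rw [this, Real.sqrt_sq (mul_nonneg hs0.le (by linarith))]
    rw [intervalIntegral.integral_congr hcongr]
    have hderiv : ∀ x ∈ Set.uIcc h (F h),
        HasDerivAt (fun y => Real.log (Real.log y)) ((x * Real.log x)⁻¹) x := by
      intro x hx
      have hxe := hmem x hx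
      have hx0 : (0:ℝ) < x := lt_of_lt_of_le (Real.exp_pos 1) hxe
      have hlx : 1 ≤ Real.log x := hlog1 x hxe
      have h1 : HasDerivAt Real.log x⁻¹ x := Real.hasDerivAt_log (ne_of_gt hx0)
      have h2 : HasDerivAt Real.log (Real.log x)⁻¹ (Real.log x) :=
        Real.hasDerivAt_log (by linarith)
      have := h2.comp x h1
      rw [show (x * Real.log x)⁻¹ = (Real.log x)⁻¹ * x⁻¹ by rw [mul_inv, mul_comm]]
      exact this
    have hcont : ContinuousOn (fun x : ℝ => (x * Real.log x)⁻¹) (Set.uIcc h (F h)) := by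
      apply ContinuousOn.inv₀
      · exact continuousOn_id.mul (Real.continuousOn_log.mono (by
          intro x hx
          have hx0 : (0:ℝ) < x := lt_of_lt_of_le (Real.exp_pos 1) (hmem x hx)
          simpa using ne_of_gt hx0))
      · intro x hx
        have hxe := hmem x hx
        have hx0 : (0:ℝ) < x := lt_of_lt_of_le (Real.exp_pos 1) hxe
        have hlx : 1 ≤ Real.log x := hlog1 x hxe
        positivity
    rw [intervalIntegral.integral_eq_sub_of_hasDerivAt hderiv
      (hcont.intervalIntegrable)]
  -- log identity eventually
  have hId : ∀ᶠ h in atTop, Real.log (w h) =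
      2 * (Real.log (F h) - Real.log h) + 2 * I h := by
    filter_upwards [hglarge, hF_ge, hF_eq] with h hh hhF hgF
    have hFe : Real.exp 1 ≤ F h := hh.trans hhF
    have key : (F h) ^ 2 * Real.log (F h) ^ 2 = h ^ 2 * Real.log h ^ 2 * w h := by
      rw [← hg (F h) hFe, hgF, hg h hh]
    have hp : (0:ℝ) < h := lt_of_lt_of_le (Real.exp_pos 1) hh
    have hFp : (0:ℝ) < F h := lt_of_lt_of_le (Real.exp_pos 1) hFe
    have hlh : 1 ≤ Real.log h := hlog1 h hh
    have hlF : 1 ≤ Real.log (F h) := hlog1 (F h) hFe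
    have hw1 : 1 ≤ w h := hw_ge h hh
    have hlog := congrArg Real.log key
    rw [Real.log_mul (by positivity) (by positivity),
      Real.log_mul (by positivity) (by linarith),
      Real.log_mul (by positivity) (by positivity),
      Real.log_pow, Real.log_pow, Real.log_pow, Real.log_pow] at hlog
    push_cast at hlog
    simp only [hIdef]
    linarith
  have hI0 : ∀ᶠ h in atTop, 0 ≤ I h := by
    filter_upwards [hglarge, hF_ge] with h hh hhF
    have hp : (0:ℝ) < h := lt_of_lt_of_le (Real.exp_pos 1) hh
    have hlh : 1 ≤ Real.log h := hlog1 h hh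
    have h1 : Real.log h ≤ Real.log (F h) := Real.log_le_log hp hhF
    have h2 : Real.log (Real.log h) ≤ Real.log (Real.log (F h)) :=
      Real.log_le_log (by linarith) h1
    simpa [hIdef] using sub_nonneg.mpr h2
  -- ratio identity eventually
  have hRat : ∀ᶠ h in atTop, Real.log (w h) / Real.log h =
      2 * (Real.exp (I h) - 1) + 2 * I h / Real.log h := by
    filter_upwards [hglarge, hF_ge, hId] with h hh hhF hid
    have hp : (0:ℝ) < h := lt_of_lt_of_le (Real.exp_pos 1) hh
    have hlh : 1 ≤ Real.log h := hlog1 h hh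
    have hlF : 1 ≤ Real.log (F h) := hlog1 (F h) (hh.trans hhF)
    have hexp : Real.exp (I h) = Real.log (F h) / Real.log h := by
      simp only [hIdef]
      rw [Real.exp_sub, Real.exp_log (by linarith), Real.exp_log (by linarith)]
    have hln0 : Real.log h ≠ 0 := by linarith
    rw [hid, hexp]
    field_simp
  -- the o-statement is equivalent to the ratio tending to 0
  have hratio_iff : ((fun h => Real.log (w h)) =o[atTop] fun h => Real.log h) ↔
      Tendsto (fun h => Real.log (w h) / Real.log h) atTop (nhds 0) := by
    apply isLittleO_iff_tendsto'
    filter_upwards [hglarge] with h hh h0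
    exact absurd h0 (by have := hlog1 h hh; linarith)
  rw [tendsto_congr' hInt, hratio_iff]
  constructor
  · intro hI
    have hexp0 : Tendsto (fun h => Real.exp (I h) - 1) atTop (nhds 0) := by
      have h1 : Tendsto (fun h => Real.exp (I h)) atTop (nhds 1) := by
        have := (Real.continuous_exp.tendsto 0).comp hI
        rw [Real.exp_zero] at this
        exact this
      simpa using h1.sub_const 1
    have hq : Tendsto (fun h => I h / Real.log h) atTop (nhds 0) := by
      have hinv : Tendsto (fun h : ℝ => (Real.log h)⁻¹) atTop (nhds 0) :=
        tendsto_inv_atTop_zero.comp Real.tendsto_log_atTop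
      simpa [div_eq_mul_inv] using hI.mul hinv
    have h1 : Tendsto (fun h => 2 * (Real.exp (I h) - 1) + 2 * I h / Real.log h)
        atTop (nhds 0) := by
      have h2 := (hexp0.const_mul 2).add (hq.const_mul 2)
      simp only [mul_div_assoc]
      simpa using h2
    exact Tendsto.congr' (hRat.mono fun _ h => h.symm) h1
  · intro hr
    have hsq : Tendsto (fun h => Real.exp (I h)) atTop (nhds 1) := by
      refine tendsto_of_tendsto_of_tendsto_of_le_of_le'
        (g := fun _ : ℝ => (1:ℝ)) (h := fun h => 1 + Real.log (w h) / Real.log h / 2)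
        (tendsto_const_nhds : Tendsto (fun _ : ℝ => (1:ℝ)) atTop (nhds 1)) ?_ ?_ ?_
      · have h1 : Tendsto (fun _ : ℝ => (1:ℝ)) atTop (nhds 1) := tendsto_const_nhds
        simpa using h1.add (hr.div_const 2)
      · filter_upwards [hI0] with h h0
        exact Real.one_le_exp h0
      · filter_upwards [hglarge, hRat, hI0] with h hh hrat h0
        have hlh : 1 ≤ Real.log h := hlog1 h hh
        have hq : 0 ≤ 2 * I h / Real.log h := by positivity
        nlinarith
    have h2 := (Real.continuousAt_log one_ne_zero).tendsto.comp hsq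
    rw [Real.log_one] at h2
    exact h2.congr (fun h => Real.log_exp _)
end
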